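/- For x of order n and m ∈ ℕ, writing the moment as a count: tr((x+x⁻¹)^m) = Σ_{j ∈ ℤ, nj ≡ m mod 2, |nj| ≤ m} C(m, (m + nj)/2). -/

import Mathlib

/-!
Since `x` and `x⁻¹` commute, the binomial theorem gives
`(x + x⁻¹)^m = Σ_k C(m,k) x^(2k-m)`, and the `k`-th term contributes to the coefficient of `1`
exactly when `n ∣ 2k - m`. Writing `2k - m = nj` turns this into the sum over `j`.
-/

open Finset

namespace MonoidAlgebra

variable {R G : Type*} [Semiring R] [Group G]

theorem of_add_of_inv_pow (x : G) (m : ℕ) :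
    (of R G x + of R G x⁻¹) ^ m =
      ∑ k ∈ range (m + 1), single (x ^ (2 * (k : ℤ) - m)) (m.choose k : R) := by
  have hc : Commute (of R G x) (of R G x⁻¹) := ((Commute.refl x).inv_right).map (of R G)
  rw [hc.add_pow]
  refine sum_congr rfl fun k hk => ?_
  have hexp : x ^ k * x⁻¹ ^ (m - k) = x ^ (2 * (k : ℤ) - m) := by
    rw [← zpow_natCast, ← zpow_natCast, inv_zpow', ← zpow_add]
    congr 1
    have := mem_range_succ_iff.mp hk
    omega
  rw [← map_pow, ← map_pow, ← map_mul, of_apply, natCast_def, single_mul_single, hexp,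
    one_mul, mul_one]

theorem coeff_one_of_add_of_inv_pow (x : G) (m : ℕ) :
    ((of R G x + of R G x⁻¹) ^ m).coeff 1 =
      ∑ k ∈ (range (m + 1)).filter (fun k : ℕ => (orderOf x : ℤ) ∣ 2 * (k : ℤ) - m),
        (m.choose k : R) := by
  classical
  simp only [of_add_of_inv_pow, coeff_sum, sum_apply', coeff_single,
    Finsupp.single_apply, orderOf_dvd_iff_zpow_eq_one, sum_filter]

end MonoidAlgebra

theorem Finset.sum_filter_dvd_two_mul_sub_eq {M : Type*} [AddCommMonoid M] (f : ℕ → M)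
    {n : ℕ} (hn : 1 ≤ n) (m : ℕ) :
    ∑ k ∈ (range (m + 1)).filter (fun k : ℕ => (n : ℤ) ∣ 2 * (k : ℤ) - m), f k =
      ∑ j ∈ (Icc (-(m : ℤ)) m).filter
          (fun j => ((n : ℤ) * j) % 2 = (m : ℤ) % 2 ∧ |(n : ℤ) * j| ≤ (m : ℤ)),
        f (((m + n * j) / 2).toNat) := by
  have hn0 : (n : ℤ) ≠ 0 := by omega
  have abs_le_abs_mul (j : ℤ) : |j| ≤ |(n : ℤ) * j| := by
    rw [abs_mul, Nat.abs_cast]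
    exact le_mul_of_one_le_left (abs_nonneg j) (by exact_mod_cast hn)
  have two_mul_half_sub {j : ℤ} (hpar : ((n : ℤ) * j) % 2 = (m : ℤ) % 2)
      (hle : -(m : ℤ) ≤ n * j) : 2 * ((((m : ℤ) + n * j) / 2).toNat : ℤ) - m = n * j := by
    omega
  symm
  refine sum_nbij' (fun j => (((m : ℤ) + n * j) / 2).toNat) (fun k => (2 * (k : ℤ) - m) / n)
    ?_ ?_ ?_ ?_ fun _ _ => rfl
  · intro j hj
    simp only [mem_filter, mem_Icc, abs_le, mem_range] at hj ⊢
    have h2k := two_mul_half_sub hj.2.1 hj.2.2.1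
    exact ⟨by omega, j, h2k⟩
  · intro k hk
    simp only [mem_filter, mem_Icc, mem_range] at hk ⊢
    obtain ⟨hkm, d, hd⟩ := hk
    rw [hd, Int.mul_ediv_cancel_left _ hn0, ← hd]
    have hbound : |2 * (k : ℤ) - m| ≤ m := by rw [abs_le]; omega
    have hdm : |d| ≤ m := (abs_le_abs_mul d).trans (hd ▸ hbound)
    exact ⟨abs_le.mp hdm, by omega, hbound⟩
  · intro j hj
    simp only [mem_filter, abs_le] at hj
    rw [two_mul_half_sub hj.2.1 hj.2.2.1, Int.mul_ediv_cancel_left _ hn0]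
  · intro k hk
    simp only [mem_filter] at hk
    obtain ⟨-, d, hd⟩ := hk
    rw [hd, Int.mul_ediv_cancel_left _ hn0, ← hd]
    omega

/-- For `x` of exact order `n ≥ 1` and `m ∈ ℕ`,
`tr((x+x⁻¹)^m) = Σ_{j ∈ ℤ, nj ≡ m (mod 2), |nj| ≤ m} C(m, (m + nj)/2)`. -/
theorem stmt_16 {G : Type*} [Group G] (x : G) (n : ℕ) (hn : 1 ≤ n) (hx : orderOf x = n)
    (m : ℕ) :
    ((MonoidAlgebra.of ℂ G x + MonoidAlgebra.of ℂ G x⁻¹) ^ m).coeff (1 : G) =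
      ∑ j ∈ (Finset.Icc (-(m : ℤ)) (m : ℤ)).filter
          (fun j => ((n : ℤ) * j) % 2 = (m : ℤ) % 2 ∧ |(n : ℤ) * j| ≤ (m : ℤ)),
        ((m.choose ((((m : ℤ) + (n : ℤ) * j) / 2).toNat)) : ℂ) := by
  subst hx
  rw [MonoidAlgebra.coeff_one_of_add_of_inv_pow]
  exact sum_filter_dvd_two_mul_sub_eq _ hn m
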